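/- arXiv:cs/0508028 — 6 statements merged into one kernel-verified Lean document; each statement's English description precedes it below -/
import Mathlib

section
/- Let f(p) = 1 + k/2 - kp + kp²/2 and g(p) = kp²/2 with k ∈ [1, 2]. Then for the expected payment w(q) = p·f(q) + (1-p)·g(q), the unique minimizer over q ∈ [0,1] is q = p; i.e., submitting the true probability minimizes the user's expected payment. -/
theorem truthful_submission_unique_minimizer (k : ℝ) (hk : k ∈ Set.Icc (1 : ℝ) 2)
    (f g : ℝ → ℝ)
    (hf : f = fun q => 1 + k / 2 - k * q + k * q ^ 2 / 2)
    (hg : g = fun q => k * q ^ 2 / 2)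
    (p : ℝ) (hp : p ∈ Set.Icc (0 : ℝ) 1)
    (w : ℝ → ℝ) (hw : w = fun q => p * f q + (1 - p) * g q) :
    (∀ q ∈ Set.Icc (0 : ℝ) 1, w p ≤ w q) ∧
    (∀ q ∈ Set.Icc (0 : ℝ) 1, w q = w p → q = p) := by
  subst hf hg hw
  obtain ⟨hk1, hk2⟩ := hk
  constructor
  · intro q _
    simp only
    nlinarith [sq_nonneg (q - p)]
  · intro q _ h
    simp only at h
    have : k * (q - p) ^ 2 = 0 := by nlinarith
    have : (q - p) ^ 2 = 0 := by
      rcases mul_eq_zero.mp this with h | h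
      · linarith
      · exact h
    have := pow_eq_zero_iff (n := 2) (by norm_num) |>.mp this
    linarith
end

section
/- Let C > 1, k ∈ [1, min(2(C-1), 2)], and w(p) = (1 + k/2)p - (k/2)p². Then for all p ∈ [0,1]: p ≤ w(p) ≤ min(1, C·p). -/
theorem expected_payment_bounds (C k : ℝ) (hC : 1 < C)
    (hk : k ∈ Set.Icc (1 : ℝ) (min (2 * (C - 1)) 2))
    (w : ℝ → ℝ) (hw : w = fun p => (1 + k / 2) * p - k / 2 * p ^ 2) :
    ∀ p ∈ Set.Icc (0 : ℝ) 1, p ≤ w p ∧ w p ≤ min 1 (C * p) := by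
  obtain ⟨hk1, hk2⟩ := hk
  rw [le_min_iff] at hk2
  obtain ⟨hkC, hk2'⟩ := hk2
  intro p hp
  obtain ⟨hp0, hp1⟩ := hp
  have hwp : w p = (1 + k / 2) * p - k / 2 * p ^ 2 := by rw [hw]
  rw [hwp]
  refine ⟨by nlinarith [mul_nonneg hp0 (sub_nonneg.2 hp1)],
    le_min (by nlinarith [mul_nonneg hp0 (sub_nonneg.2 hp1)])
      (by nlinarith [mul_nonneg hp0 (sub_nonneg.2 hp1)])⟩
end

section
/- For the function R(C₁, C₂) = C₁ - C₁² + (2C₁³/3 - C₁²/2)/C₂ on the domain 0 ≤ C₁ ≤ C₂ ≤ 1, the maximum value is 5/24, attained at C₁ = 1/2, C₂ = 1. -/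
/-!
For fixed `C₁` the revenue is affine in `1 / C₂`, so on `C₁ ≤ C₂ ≤ 1` it is maximised at an
endpoint. On the diagonal it equals `C/2 - C²/3 ≤ 3/16`, and on the edge `C₂ = 1` it equals
`5/24 - (1 - 2C)²(5 - 4C)/24`.
-/

theorem add_div_le_max_of_mem_Icc (a b : ℝ) {lo x hi : ℝ} (hlo : 0 < lo) (hx : x ∈ Set.Icc lo hi) :
    a + b / x ≤ max (a + b / lo) (a + b / hi) := by
  rcases le_total 0 b with hb | hb
  · exact le_max_of_le_left <| add_le_add_right (div_le_div_of_nonneg_left hb hlo hx.1) a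
  · have := div_le_div_of_nonneg_left (neg_nonneg.2 hb) (hlo.trans_le hx.1) hx.2
    rw [neg_div, neg_div, neg_le_neg_iff] at this
    exact le_max_of_le_right <| add_le_add_right this a

noncomputable def revenue (C₁ C₂ : ℝ) : ℝ :=
  C₁ - C₁ ^ 2 + (2 * C₁ ^ 3 / 3 - C₁ ^ 2 / 2) / C₂

theorem revenue_self (C : ℝ) : revenue C C = C / 2 - C ^ 2 / 3 := by
  rcases eq_or_ne C 0 with rfl | hC
  · simp [revenue]
  · unfold revenue
    field_simp
    ring

theorem revenue_self_le (C : ℝ) : revenue C C ≤ 5 / 24 := by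
  rw [revenue_self]
  nlinarith [sq_nonneg (C - 3 / 4)]

theorem revenue_one (C : ℝ) : revenue C 1 = 5 / 24 - (1 - 2 * C) ^ 2 * (5 - 4 * C) / 24 := by
  unfold revenue
  ring

theorem revenue_one_le {C : ℝ} (hC : C ≤ 5 / 4) : revenue C 1 ≤ 5 / 24 := by
  rw [revenue_one]
  have : 0 ≤ (1 - 2 * C) ^ 2 * (5 - 4 * C) := mul_nonneg (sq_nonneg _) (by linarith)
  linarith

theorem revenue_le {C₁ C₂ : ℝ} (h₀ : 0 ≤ C₁) (h₁ : C₁ ≤ C₂) (h₂ : C₂ ≤ 1) :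
    revenue C₁ C₂ ≤ 5 / 24 := by
  rcases h₀.eq_or_lt with rfl | hpos
  · simp [revenue]
    norm_num
  · calc revenue C₁ C₂ ≤ max (revenue C₁ C₁) (revenue C₁ 1) :=
          add_div_le_max_of_mem_Icc _ _ hpos ⟨h₁, h₂⟩
      _ ≤ 5 / 24 := max_le (revenue_self_le C₁) (revenue_one_le (by linarith))

theorem direct_selling_max_revenue
    (R : ℝ → ℝ → ℝ)
    (hR : R = fun C₁ C₂ => C₁ - C₁ ^ 2 + (2 * C₁ ^ 3 / 3 - C₁ ^ 2 / 2) / C₂) :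
    (∀ C₁ C₂ : ℝ, 0 ≤ C₁ → C₁ ≤ C₂ → C₂ ≤ 1 → R C₁ C₂ ≤ 5 / 24) ∧
    R (1 / 2) 1 = 5 / 24 := by
  subst hR
  refine ⟨fun C₁ C₂ h₀ h₁ h₂ => revenue_le h₀ h₁ h₂, ?_⟩
  norm_num
end

section
/- Let 0 ≤ C₁ ≤ C₂ ≤ 1. Then ∫₀¹ (1 - min(C₁, C₂p))·min(C₁, C₂p) dp = C₁ - C₁² + (2C₁³/3 - C₁²/2)·(1/C₂), provided C₂ > 0. -/
open intervalIntegral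

/-- Split at `p = a / b`, where `min a (b * p)` stops being linear, and substitute `x = b * p` on
the linear part. -/
theorem integral_comp_min_const_mul {f : ℝ → ℝ} (hf : Continuous f) {a b : ℝ}
    (ha : 0 ≤ a) (hab : a ≤ b) (hb : 0 < b) :
    ∫ p in (0 : ℝ)..1, f (min a (b * p)) = b⁻¹ * (∫ x in (0 : ℝ)..a, f x) + (1 - a / b) * f a := by
  have hc0 : 0 ≤ a / b := div_nonneg ha hb.le
  have hc1 : a / b ≤ 1 := (div_le_one hb).mpr hab
  have hcont : Continuous fun p : ℝ => f (min a (b * p)) := by fun_prop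
  rw [← integral_add_adjacent_intervals (hcont.intervalIntegrable 0 (a / b))
    (hcont.intervalIntegrable (a / b) 1)]
  have linear_part : ∫ p in (0 : ℝ)..a / b, f (min a (b * p)) = ∫ p in (0 : ℝ)..a / b, f (b * p) := by
    refine integral_congr fun p hp => ?_
    rw [Set.uIcc_of_le hc0] at hp
    have : b * p ≤ a := (le_div_iff₀' hb).mp hp.2
    simp only [min_eq_right this]
  have constant_part : ∫ p in a / b..1, f (min a (b * p)) = ∫ _ in a / b..1, f a := by
    refine integral_congr fun p hp => ?_
    rw [Set.uIcc_of_le hc1] at hp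
    have : a ≤ b * p := (div_le_iff₀' hb).mp hp.1
    simp only [min_eq_left this]
  rw [linear_part, constant_part, integral_comp_mul_left f hb.ne', mul_zero,
    mul_div_cancel₀ a hb.ne', integral_const, smul_eq_mul, smul_eq_mul]

theorem integral_one_sub_mul_self (a : ℝ) :
    ∫ x in (0 : ℝ)..a, (1 - x) * x = a ^ 2 / 2 - a ^ 3 / 3 := by
  have hx : IntervalIntegrable (fun x : ℝ => x) MeasureTheory.volume 0 a :=
    continuous_id.intervalIntegrable 0 a
  have hx2 : IntervalIntegrable (fun x : ℝ => x ^ 2) MeasureTheory.volume 0 a :=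
    (continuous_pow 2).intervalIntegrable 0 a
  simp_rw [sub_mul, one_mul, ← sq]
  rw [integral_sub hx hx2, integral_id, integral_pow]
  ring

theorem direct_selling_revenue_integral_general (C₁ C₂ : ℝ)
    (h1 : 0 ≤ C₁) (h2 : C₁ ≤ C₂) (h4 : 0 < C₂) :
    ∫ p in (0 : ℝ)..1, (1 - min C₁ (C₂ * p)) * min C₁ (C₂ * p)
      = C₁ - C₁ ^ 2 + (2 * C₁ ^ 3 / 3 - C₁ ^ 2 / 2) * (1 / C₂) := by
  rw [integral_comp_min_const_mul (f := fun x => (1 - x) * x) (by fun_prop) h1 h2 h4,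
    integral_one_sub_mul_self]
  field_simp
  ring

theorem direct_selling_revenue_integral (C₁ C₂ : ℝ)
    (h1 : 0 ≤ C₁) (h2 : C₁ ≤ C₂) (h3 : C₂ ≤ 1) (h4 : 0 < C₂) :
    ∫ p in (0 : ℝ)..1, (1 - min C₁ (C₂ * p)) * min C₁ (C₂ * p)
      = C₁ - C₁ ^ 2 + (2 * C₁ ^ 3 / 3 - C₁ ^ 2 / 2) * (1 / C₂) :=
  direct_selling_revenue_integral_general C₁ C₂ h1 h2 h4
end

section
/- The function R(C₁, k) = C₁/2 - C₁²/3 + C₁k/12 - C₁²k/12 - C₁²k²/120 on the domain 0 ≤ C₁ ≤ 1, 1 ≤ k ≤ 2 attains its maximum value 5/24 at C₁ = 5/8, k = 2. -/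
theorem option_selling_max_revenue
    (R : ℝ → ℝ → ℝ)
    (hR : R = fun C₁ k =>
      C₁ / 2 - C₁ ^ 2 / 3 + C₁ * k / 12 - C₁ ^ 2 * k / 12 - C₁ ^ 2 * k ^ 2 / 120) :
    (∀ C₁ k : ℝ, 0 ≤ C₁ → C₁ ≤ 1 → 1 ≤ k → k ≤ 2 → R C₁ k ≤ 5 / 24) ∧
    R (5 / 8) 2 = 5 / 24 := by
  subst hR
  constructor
  · intro C₁ k h0 h1 hk1 hk2
    simp only
    nlinarith [sq_nonneg (C₁ - 5/8), sq_nonneg (k - 2), mul_nonneg h0 (sub_nonneg.2 hk1),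
      sq_nonneg (C₁ * k - 5/4), mul_nonneg (mul_nonneg h0 h0) (sub_nonneg.2 hk1),
      mul_nonneg (sq_nonneg (C₁ - 5/8)) (sub_nonneg.2 (le_trans hk1 hk2)),
      mul_nonneg (mul_nonneg h0 h0) (mul_nonneg (sub_nonneg.2 hk1) (sub_nonneg.2 hk2)),
      sq_nonneg (8*C₁ - 5), sq_nonneg (8*C₁*k - 10)]
  · norm_num
end

section
/- Let C > 1, k ∈ [1, min(2(C-1), 2)], 0 < α < 1/C, w₁(p) = (1 + k/2)p - (k/2)p². For p₁ ∈ [0,1], p₂₁, p₂₂ ∈ [0,1] with p = p₁p₂₁ + (1-p₁)p₂₂, define c₂ = C(p₁w₁(p₂₁) + (1-p₁)w₁(p₂₂)) and c₁₂ = (1 - αC)w₁(p) + αc₂. Then c₁₂ ≤ c₂, with strict inequality unless p₂₁ = p₂₂ ∈ {0, 1} or related degenerate cases; in particular c₁₂ ≤ c₂ always holds. -/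
/-!
Write `E = p₁ w₁(p₂₁) + (1 - p₁) w₁(p₂₂)`, so `c₂ = C E`. Since `w₁` is a quadratic with leading
coefficient `-k/2`, Jensen's gap is explicit: `w₁(p) = E + (k/2) p₁ (1 - p₁) (p₂₁ - p₂₂)²`.
The variance term is at most `p ≤ E`, and `k/2 ≤ C - 1`, so `w₁(p) ≤ C E = c₂`. Hence `c₁₂` is a
weighted average of `w₁(p) ≤ c₂` and `c₂`, discounted by `α (C - 1) c₂ ≥ 0`.
-/

noncomputable def payment (k x : ℝ) : ℝ := (1 + k / 2) * x - k / 2 * x ^ 2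

lemma self_le_payment {k x : ℝ} (hk : 0 ≤ k) (hx : x ∈ Set.Icc (0 : ℝ) 1) :
    x ≤ payment k x := by
  have hgap : payment k x - x = k / 2 * (x * (1 - x)) := by unfold payment; ring
  have : 0 ≤ k / 2 * (x * (1 - x)) := by have := hx.1; have := sub_nonneg.2 hx.2; positivity
  linarith

lemma payment_mix (k t a b : ℝ) :
    payment k (t * a + (1 - t) * b)
      = t * payment k a + (1 - t) * payment k b + k / 2 * (t * (1 - t) * (a - b) ^ 2) := by
  unfold payment
  ring

lemma mix_variance_le_mix {t a b : ℝ} (ht : t ∈ Set.Icc (0 : ℝ) 1)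
    (ha : a ∈ Set.Icc (0 : ℝ) 1) (hb : b ∈ Set.Icc (0 : ℝ) 1) :
    t * (1 - t) * (a - b) ^ 2 ≤ t * a + (1 - t) * b := by
  obtain ⟨ht0, ht1⟩ := ht
  obtain ⟨ha0, ha1⟩ := ha
  obtain ⟨hb0, hb1⟩ := hb
  have hsq : (a - b) ^ 2 ≤ a + b := by nlinarith
  have hvar : t * (1 - t) * (a - b) ^ 2 ≤ t * (1 - t) * (a + b) :=
    mul_le_mul_of_nonneg_left hsq (mul_nonneg ht0 (by linarith))
  have hgap : t * a + (1 - t) * b - t * (1 - t) * (a + b) = t ^ 2 * a + (1 - t) ^ 2 * b := by ring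
  have : 0 ≤ t ^ 2 * a + (1 - t) ^ 2 * b := by positivity
  linarith

lemma payment_mix_le {C k t a b : ℝ} (hk0 : 0 ≤ k) (hkC : k ≤ 2 * (C - 1))
    (ht : t ∈ Set.Icc (0 : ℝ) 1) (ha : a ∈ Set.Icc (0 : ℝ) 1) (hb : b ∈ Set.Icc (0 : ℝ) 1) :
    payment k (t * a + (1 - t) * b) ≤ C * (t * payment k a + (1 - t) * payment k b) := by
  set E := t * payment k a + (1 - t) * payment k b
  have hmix_le : t * a + (1 - t) * b ≤ E := by
    have := self_le_payment hk0 ha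
    have := self_le_payment hk0 hb
    nlinarith [ht.1, ht.2]
  have hvar_le : t * (1 - t) * (a - b) ^ 2 ≤ E := (mix_variance_le_mix ht ha hb).trans hmix_le
  have hvar0 : 0 ≤ t * (1 - t) * (a - b) ^ 2 := by
    have := ht.1; have := sub_nonneg.2 ht.2
    positivity
  rw [payment_mix]
  nlinarith

lemma interpolate_le {C α w c : ℝ} (hC : 1 ≤ C) (hα : 0 ≤ α) (hαC : α * C ≤ 1)
    (hw : w ≤ c) (hc : 0 ≤ c) : (1 - α * C) * w + α * c ≤ c :=
  calc (1 - α * C) * w + α * c ≤ (1 - α * C) * c + α * c := by gcongr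
    _ = c - α * (C - 1) * c := by ring
    _ ≤ c := sub_le_self _ (by have := sub_nonneg.2 hC; positivity)

theorem submit_twice_cheaper
    (C k α : ℝ) (hC : 1 < C)
    (hk : k ∈ Set.Icc (1 : ℝ) (min (2 * (C - 1)) 2))
    (hα1 : 0 < α) (hα2 : α < 1 / C)
    (w₁ : ℝ → ℝ) (hw : w₁ = fun p => (1 + k / 2) * p - k / 2 * p ^ 2)
    (p₁ p₂₁ p₂₂ : ℝ)
    (hp₁ : p₁ ∈ Set.Icc (0 : ℝ) 1) (hp₂₁ : p₂₁ ∈ Set.Icc (0 : ℝ) 1)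
    (hp₂₂ : p₂₂ ∈ Set.Icc (0 : ℝ) 1)
    (p : ℝ) (hp : p = p₁ * p₂₁ + (1 - p₁) * p₂₂)
    (c₂ c₁₂ : ℝ)
    (hc₂ : c₂ = C * (p₁ * w₁ p₂₁ + (1 - p₁) * w₁ p₂₂))
    (hc₁₂ : c₁₂ = (1 - α * C) * w₁ p + α * c₂) :
    c₁₂ ≤ c₂ := by
  have hk0 : 0 ≤ k := zero_le_one.trans hk.1
  have hkC : k ≤ 2 * (C - 1) := hk.2.trans (min_le_left _ _)
  have hw' : w₁ = payment k := hw
  subst hw' hp hc₁₂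
  have hc₂_nonneg : 0 ≤ c₂ := by
    have := hp₁.1; have := sub_nonneg.2 hp₁.2
    have := (self_le_payment hk0 hp₂₁).trans' hp₂₁.1
    have := (self_le_payment hk0 hp₂₂).trans' hp₂₂.1
    rw [hc₂]; positivity
  have hαC : α * C ≤ 1 := ((lt_div_iff₀ (by linarith)).1 hα2).le
  exact interpolate_le hC.le hα1.le hαC (hc₂ ▸ payment_mix_le hk0 hkC hp₁ hp₂₁ hp₂₂) hc₂_nonneg
end
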